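/- arXiv:1110.3856 — 3 statements merged into one kernel-verified Lean document; each statement's English description precedes it below -/
import Mathlib

section
/- Fix x ∈ (0,1), and let μ_x be the product probability measure on ℕ^{ℕ≥1} whose i-th coordinate Z_i is geometric with parameter x^i, i.e. P(Z_i = k) = (1−x^i)·x^{ik}, with all coordinates independent. For n ≥ 1, the μ_x-probability of the event {ω : ω is finitely supported and Σ_{i≥1} i·ω(i) = n} equals p_n · x^n · ∏_{i=1}^∞ (1−x^i), where p_n is the number of partitions of n. -/
open MeasureTheory ProbabilityTheory
open Filter Topology

/-!
The event is the disjoint union, over the partitions `p` of `n`, of the single configurations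
`ω = p.counts` recording the multiplicity of each part: these are exactly the finitely supported
`ω` with `∑ i * ω i = n`. By independence and continuity of `μ` from above, a single
configuration `ω` has probability
`∏ i, (1 - x ^ i) * x ^ (i * ω i) = x ^ n * ∏ i, (1 - x ^ i)`, which does not depend on `p`.
-/

theorem multipliable_one_sub_pow {x : ℝ} (hx₀ : 0 ≤ x) (hx₁ : x < 1) :
    Multipliable fun i : {i : ℕ // 0 < i} => 1 - x ^ (i : ℕ) := by
  simpa only [sub_eq_add_neg, Function.comp_def] using Real.multipliable_one_add_of_summable
    ((summable_geometric_of_lt_one hx₀ hx₁).comp_injective Subtype.val_injective).neg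

theorem hasProd_pow_finsum {ι M : Type*} [CommMonoid M] [TopologicalSpace M] (x : M)
    {g : ι → ℕ} (hg : (Function.support g).Finite) :
    HasProd (fun i => x ^ g i) (x ^ ∑ᶠ i, g i) := by
  rw [finsum_eq_sum_of_support_subset g hg.coe_toFinset.ge, ← Finset.prod_pow_eq_pow_sum]
  refine hasProd_prod_of_ne_finset_one fun i hi => ?_
  rw [hg.mem_toFinset, Function.notMem_support] at hi
  rw [hi, pow_zero]

theorem HasProd.ennrealOfReal {ι : Type*} {g : ι → ℝ} {a : ℝ} (h : HasProd g a)
    (hg : ∀ i, 0 ≤ g i) : HasProd (fun i => ENNReal.ofReal (g i)) (ENNReal.ofReal a) := by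
  refine ((ENNReal.continuous_ofReal.tendsto a).comp h).congr fun s => ?_
  exact ENNReal.ofReal_prod_of_nonneg fun i _ => hg i

theorem ProbabilityTheory.iIndepFun.hasProd_measure_singleton {ι α : Type*} [Countable ι]
    [MeasurableSpace α] [MeasurableSingletonClass α]
    {μ : Measure (ι → α)} [IsFiniteMeasure μ]
    (h : iIndepFun (fun i ω => ω i) μ) (f : ι → α) :
    HasProd (fun i => μ {ω | ω i = f i}) (μ {f}) := by
  set A : Finset ι → Set (ι → α) := fun s => ⋂ i ∈ s, (fun ω => ω i) ⁻¹' {f i}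
  have hA : ⋂ s, A s = {f} := by
    ext ω
    simp only [A, Set.mem_iInter, Set.mem_preimage, Set.mem_singleton_iff, funext_iff]
    exact ⟨fun hω i => hω {i} i (Finset.mem_singleton_self i), fun hω _ i _ => hω i⟩
  have hlim : Tendsto (μ ∘ A) atTop (𝓝 (μ {f})) := by
    rw [← hA]
    refine tendsto_measure_iInter_atTop (fun s => ?_) (fun s t hst => ?_)
      ⟨∅, measure_ne_top μ _⟩
    · exact (Finset.measurableSet_biInter _ fun i _ =>
        measurable_pi_apply i (measurableSet_singleton _)).nullMeasurableSet
    · exact Set.biInter_subset_biInter_left hst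
  refine hlim.congr fun s => ?_
  exact h.measure_inter_preimage_eq_mul s fun i _ => measurableSet_singleton _

namespace Nat.Partition

def counts {n : ℕ} (p : n.Partition) (i : {i : ℕ // 0 < i}) : ℕ := p.parts.count i.1

variable {n : ℕ}

theorem counts_injective : Function.Injective (counts (n := n)) := by
  intro p q h
  ext m
  rcases m.eq_zero_or_pos with rfl | hm
  · rw [Multiset.count_eq_zero_of_notMem fun h => (p.parts_pos h).false,
      Multiset.count_eq_zero_of_notMem fun h => (q.parts_pos h).false]
  · exact congrFun h ⟨m, hm⟩

theorem finite_support_counts (p : n.Partition) : (Function.support p.counts).Finite :=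
  (p.parts.toFinset.finite_toSet.preimage Subtype.val_injective.injOn).subset
    fun i hi => by simpa [counts] using hi

theorem finsum_mul_counts (p : n.Partition) : ∑ᶠ i, i.1 * p.counts i = n := by
  refine (finsum_subtype_eq_finsum_cond (f := fun m => m * p.parts.count m) (0 < ·)).trans ?_
  rw [finsum_cond_eq_sum_of_cond_iff (t := p.parts.toFinset)]
  · simp only [mul_comm _ (Multiset.count _ _), ← smul_eq_mul, ← Finset.sum_multiset_count,
      p.parts_sum]
  · intro m hm
    have hm' : 0 < m ∧ 0 < p.parts.count m := by
      simpa [Nat.pos_iff_ne_zero] using hm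
    simp [hm'.1, Multiset.count_pos.mp hm'.2]

theorem exists_counts_eq {ω : {i : ℕ // 0 < i} → ℕ} (hω : (Function.support ω).Finite) :
    ∃ p : (∑ᶠ i, i.1 * ω i).Partition, p.counts = ω := by
  set l : Multiset ℕ := ∑ i ∈ hω.toFinset, Multiset.replicate (ω i) i.1
  have hsum : l.sum = ∑ᶠ i, i.1 * ω i := by
    rw [finsum_eq_sum_of_support_subset _
      ((Function.support_mul_subset_right _ _).trans hω.coe_toFinset.ge)]
    simp [l, Multiset.sum_sum, mul_comm]
  refine ⟨ofSums _ l hsum, funext fun i => ?_⟩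
  rw [counts, count_ofSums_of_ne_zero hsum i.2.ne']
  simp [l, Multiset.count_sum', Multiset.count_replicate, Subtype.coe_inj, eq_comm]

theorem range_counts :
    Set.range (counts (n := n)) =
      {ω | (Function.support ω).Finite ∧ ∑ᶠ i : {i : ℕ // 0 < i}, i.1 * ω i = n} := by
  ext ω
  constructor
  · rintro ⟨p, rfl⟩
    exact ⟨p.finite_support_counts, p.finsum_mul_counts⟩
  · rintro ⟨hω, rfl⟩
    exact exists_counts_eq hω

end Nat.Partition

theorem measure_singleton_of_finsum_mul_eq {x : ℝ} (hx₀ : 0 ≤ x) (hx₁ : x < 1)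
    {μ : Measure ({i : ℕ // 0 < i} → ℕ)} [IsFiniteMeasure μ]
    (hindep : iIndepFun (fun (i : {i : ℕ // 0 < i}) (ω : {i : ℕ // 0 < i} → ℕ) => ω i) μ)
    (hmarg : ∀ (i : {i : ℕ // 0 < i}) (k : ℕ),
      μ {ω | ω i = k} = ENNReal.ofReal ((1 - x ^ (i : ℕ)) * x ^ ((i : ℕ) * k)))
    {n : ℕ} {ω : {i : ℕ // 0 < i} → ℕ} (hω : (Function.support ω).Finite)
    (hsum : ∑ᶠ i : {i : ℕ // 0 < i}, i.1 * ω i = n) :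
    μ {ω} = ENNReal.ofReal (x ^ n * ∏' i : {i : ℕ // 0 < i}, (1 - x ^ (i : ℕ))) := by
  have hpow : HasProd (fun i : {i : ℕ // 0 < i} => x ^ (i.1 * ω i)) (x ^ n) :=
    hsum ▸ hasProd_pow_finsum x (hω.subset (Function.support_mul_subset_right _ _))
  have hprod := ((multipliable_one_sub_pow hx₀ hx₁).hasProd.mul hpow).ennrealOfReal
    fun i => mul_nonneg (sub_nonneg.mpr (pow_le_one₀ hx₀ hx₁.le)) (pow_nonneg hx₀ _)
  simp_rw [← hmarg, mul_comm (∏' _, _)] at hprod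
  exact (hindep.hasProd_measure_singleton ω).unique hprod

theorem fristedt_weighted_sum_prob_general (x : ℝ) (hx : x ∈ Set.Ioo (0 : ℝ) 1)
    (μ : Measure ({i : ℕ // 0 < i} → ℕ)) [IsProbabilityMeasure μ]
    (hindep : iIndepFun (fun (i : {i : ℕ // 0 < i}) (ω : {i : ℕ // 0 < i} → ℕ) => ω i) μ)
    (hmarg : ∀ (i : {i : ℕ // 0 < i}) (k : ℕ),
      μ {ω | ω i = k} = ENNReal.ofReal ((1 - x ^ (i : ℕ)) * x ^ ((i : ℕ) * k)))
    (n : ℕ) :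
    μ {ω | (Function.support ω).Finite ∧ ∑ᶠ i : {i : ℕ // 0 < i}, i.1 * ω i = n} =
      ENNReal.ofReal ((Fintype.card (Nat.Partition n) : ℝ) * x ^ n *
        ∏' i : {i : ℕ // 0 < i}, (1 - x ^ (i : ℕ))) := by
  have hsingle (p : n.Partition) :
      μ {p.counts} = ENNReal.ofReal (x ^ n * ∏' i : {i : ℕ // 0 < i}, (1 - x ^ (i : ℕ))) :=
    measure_singleton_of_finsum_mul_eq hx.1.le hx.2 hindep hmarg p.finite_support_counts
      p.finsum_mul_counts
  rw [← Nat.Partition.range_counts, ← Set.iUnion_singleton_eq_range,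
    measure_iUnion (fun p q hpq => Set.disjoint_singleton.mpr
      (Nat.Partition.counts_injective.ne hpq)) fun p => measurableSet_singleton _,
    tsum_fintype, Finset.sum_congr rfl fun p _ => hsingle p, Finset.sum_const, Finset.card_univ,
    nsmul_eq_mul, ← ENNReal.ofReal_natCast, ← ENNReal.ofReal_mul (Nat.cast_nonneg _), mul_assoc]

/-- Under the product measure whose `i`-th coordinate is geometric with
parameter `x^i` (independent coordinates), the probability that the coordinate
vector is finitely supported with weighted sum `Σ i·Z_i = n` equals
`p_n · x^n · ∏_{i≥1}(1 - x^i)`, where `p_n` is the number of partitions of `n`. -/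
theorem fristedt_weighted_sum_prob (x : ℝ) (hx : x ∈ Set.Ioo (0 : ℝ) 1)
    (μ : Measure ({i : ℕ // 0 < i} → ℕ)) [IsProbabilityMeasure μ]
    (hindep : iIndepFun (fun (i : {i : ℕ // 0 < i}) (ω : {i : ℕ // 0 < i} → ℕ) => ω i) μ)
    (hmarg : ∀ (i : {i : ℕ // 0 < i}) (k : ℕ),
      μ {ω | ω i = k} = ENNReal.ofReal ((1 - x ^ (i : ℕ)) * x ^ ((i : ℕ) * k)))
    (n : ℕ) (hn : 1 ≤ n) :
    μ {ω | (Function.support ω).Finite ∧ ∑ᶠ i : {i : ℕ // 0 < i}, i.1 * ω i = n} =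
      ENNReal.ofReal ((Fintype.card (Nat.Partition n) : ℝ) * x ^ n *
        ∏' i : {i : ℕ // 0 < i}, (1 - x ^ (i : ℕ))) :=
  fristedt_weighted_sum_prob_general x hx μ hindep hmarg n
end

section
/- Let c = π/√6 and for n ≥ 1 set x(n) = exp(−c/√n). Then, as n → ∞: (1/n)·Σ_{i=2}^n i·x(n)^i/(1 + x(n)^i) → 1/2, and (1/n^{3/2})·Σ_{i=2}^n i²·x(n)^i/(1 + x(n)^i)² → 1/c. Equivalently, for independent Bernoulli random variables ε_i with P(ε_i = 1) = x(n)^i/(1 + x(n)^i), the weighted sum T_A = Σ_{i=2}^n i·ε_i satisfies E T_A ∼ n/2 and Var T_A ∼ (1/c)·n^{3/2}. -/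
/-!
Write `x = e^{-ε}`. Expanding `1/(1 + x^i)` and `1/(1 + x^i)²` as geometric series in `-x^i` and
summing over `i` first turns `Σ i x^i/(1 + x^i)` into `Σ_j (-1)^j x^{j+1}/(1 - x^{j+1})²` and
`Σ i² x^i/(1 + x^i)²` into `Σ_j (-1)^j (j+1) x^{j+1}(1 + x^{j+1})/(1 - x^{j+1})³`. After scaling
by `ε²` (resp. `ε³`) the `j`-th term is `(-1)^j/(j+1)² · ψ((j+1)ε)` with `ψ(t) → 1` (resp. `2`) as
`t → 0⁺` and `ψ` bounded, so dominated convergence yields `η(2) = π²/12` (resp. `2η(2) = π²/6`).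
Truncating to `2 ≤ i ≤ n` costs `O(1)` plus the tail `i > n`; Markov's trick `1 ≤ i/(n+1)` bounds
the tail by the next moment divided by `n + 1`, which is `O(ε)` after scaling, because `nε² = c²`
for `ε = c/√n`. Finally `1/n = ε²/c²`, `1/n^{3/2} = ε³/c³` and `c² = π²/6`.
-/

open Filter Real

/-- The Fristedt tilt `x(n) = exp(-c/√n)` with `c = π/√6`. -/
noncomputable def fristedtX (n : ℕ) : ℝ := Real.exp (-(Real.pi / Real.sqrt 6) / Real.sqrt n)

open Topology Nat

lemma one_add_pow_mul_exp_neg_le (k : ℕ) {t : ℝ} (ht : 0 ≤ t) :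
    (1 + t) ^ k * exp (-t) ≤ k ! := by
  have hbinom : (1 + t) ^ k ≤ k ! * ∑ i ∈ Finset.range (k + 1), t ^ i / i ! := by
    rw [add_comm, add_pow, Finset.mul_sum]
    refine Finset.sum_le_sum fun i hi => ?_
    have hchoose : (k.choose i : ℝ) * i ! ≤ k ! := by
      have := Nat.choose_mul_factorial_mul_factorial (Finset.mem_range_succ_iff.mp hi)
      exact_mod_cast this ▸ Nat.le_mul_of_pos_right _ (Nat.factorial_pos _)
    rw [one_pow, mul_one, mul_div_assoc', le_div_iff₀ (by positivity)]
    nlinarith [pow_nonneg ht i]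
  calc (1 + t) ^ k * exp (-t) ≤ k ! * exp t * exp (-t) := by
        gcongr
        exact hbinom.trans (mul_le_mul_of_nonneg_left (Real.sum_le_exp_of_nonneg ht _)
          (by positivity))
    _ = k ! := by rw [mul_assoc, ← Real.exp_add, add_neg_cancel, Real.exp_zero, mul_one]

lemma one_sub_exp_neg_pos {t : ℝ} (ht : 0 < t) : 0 < 1 - exp (-t) := by
  have := Real.exp_lt_one_iff.mpr (neg_lt_zero.mpr ht)
  linarith

lemma one_le_div_one_sub_exp_neg {t : ℝ} (ht : 0 < t) : 1 ≤ t / (1 - exp (-t)) := by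
  rw [one_le_div (one_sub_exp_neg_pos ht)]
  linarith [Real.add_one_le_exp (-t)]

lemma div_one_sub_exp_neg_le {t : ℝ} (ht : 0 < t) : t / (1 - exp (-t)) ≤ 1 + t := by
  rw [div_le_iff₀ (one_sub_exp_neg_pos ht)]
  have := one_add_pow_mul_exp_neg_le 1 ht.le
  rw [pow_one, Nat.factorial_one, Nat.cast_one] at this
  nlinarith

lemma tendsto_div_one_sub_exp_neg :
    Tendsto (fun t => t / (1 - exp (-t))) (𝓝[>] 0) (𝓝 1) := by
  have hupper : Tendsto (fun t : ℝ => 1 + t) (𝓝 0) (𝓝 (1 + 0)) :=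
    tendsto_const_nhds.add tendsto_id
  rw [add_zero] at hupper
  refine tendsto_of_tendsto_of_tendsto_of_le_of_le' tendsto_const_nhds
    (hupper.mono_left nhdsWithin_le_nhds) ?_ ?_
  · filter_upwards [self_mem_nhdsWithin] with t ht using one_le_div_one_sub_exp_neg ht
  · filter_upwards [self_mem_nhdsWithin] with t ht using div_one_sub_exp_neg_le ht

lemma hasSum_one_div_succ_sq : HasSum (fun j : ℕ => 1 / ((j : ℝ) + 1) ^ 2) (π ^ 2 / 6) := by
  have := (hasSum_nat_add_iff (f := fun n : ℕ => 1 / (n : ℝ) ^ 2) 1).mpr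
    (by simpa using hasSum_zeta_two)
  exact_mod_cast this

lemma hasSum_neg_one_pow_div_succ_sq :
    HasSum (fun j : ℕ => (-1) ^ j / ((j : ℝ) + 1) ^ 2) (π ^ 2 / 12) := by
  set oddPart : ℕ → ℝ := fun j => if Odd j then 1 / ((j : ℝ) + 1) ^ 2 else 0 with hoddPart
  have hodd : HasSum oddPart (π ^ 2 / 24) := by
    have heven : HasSum (fun m => oddPart (2 * m)) 0 := hasSum_zero.congr_fun fun m => by
      simp [hoddPart, Nat.not_odd_iff_even.mpr (even_two_mul m)]
    have hodd' : HasSum (fun m => oddPart (2 * m + 1)) (π ^ 2 / 24) := by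
      rw [show π ^ 2 / 24 = 1 / 4 * (π ^ 2 / 6) by ring]
      refine (hasSum_one_div_succ_sq.mul_left (1 / 4)).congr_fun fun m => ?_
      simp only [hoddPart, if_pos (odd_two_mul_add_one m)]
      push_cast
      field_simp
      ring
    simpa using heven.even_add_odd hodd'
  rw [show π ^ 2 / 12 = π ^ 2 / 6 - 2 * (π ^ 2 / 24) by ring]
  refine (hasSum_one_div_succ_sq.sub (hodd.mul_left 2)).congr_fun fun j => ?_
  rcases Nat.even_or_odd j with h | h
  · simp [hoddPart, h.neg_one_pow, Nat.not_odd_iff_even.mpr h]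
  · simp only [hoddPart, h.neg_one_pow, if_pos h]
    ring

lemma hasSum_sq_mul_geometric_of_norm_lt_one {y : ℝ} (hy : ‖y‖ < 1) :
    HasSum (fun i : ℕ => (i : ℝ) ^ 2 * y ^ i) (y * (1 + y) / (1 - y) ^ 3) := by
  have hy1 : 1 - y ≠ 0 := by
    have := (le_abs_self y).trans_lt (by simpa using hy); linarith
  have h := ((hasSum_choose_mul_geometric_of_norm_lt_one 2 hy).mul_left 2).sub
    (((hasSum_coe_mul_geometric_of_norm_lt_one hy).mul_left 3).add
      ((hasSum_geometric_of_norm_lt_one hy).mul_left 2))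
  rw [show y * (1 + y) / (1 - y) ^ 3
      = 2 * (1 / (1 - y) ^ (2 + 1)) - (3 * (y / (1 - y) ^ 2) + 2 * (1 - y)⁻¹) by
    field_simp; ring]
  refine h.congr_fun fun i => ?_
  rw [Nat.cast_choose_two]
  push_cast
  ring

-- `parityTerm 1 x i = i · 𝔼 εᵢ` and `parityTerm 2 x i = i² · Var εᵢ` for the parity bit `εᵢ`.
noncomputable def parityTerm (k : ℕ) (x : ℝ) (i : ℕ) : ℝ := (i : ℝ) ^ k * x ^ i / (1 + x ^ i) ^ k

lemma parityTerm_nonneg (k : ℕ) {x : ℝ} (hx : 0 ≤ x) (i : ℕ) : 0 ≤ parityTerm k x i := by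
  unfold parityTerm; positivity

lemma parityTerm_le (k : ℕ) {x : ℝ} (hx : 0 ≤ x) (i : ℕ) :
    parityTerm k x i ≤ (i : ℝ) ^ k * x ^ i :=
  div_le_self (by positivity) (one_le_pow₀ (le_add_of_nonneg_right (by positivity)))

lemma summable_parityTerm (k : ℕ) {x : ℝ} (hx0 : 0 ≤ x) (hx1 : x < 1) :
    Summable (parityTerm k x) :=
  (summable_pow_mul_geometric_of_norm_lt_one k (by rwa [Real.norm_of_nonneg hx0])).of_nonneg_of_le
    (parityTerm_nonneg k hx0) (parityTerm_le k hx0)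

-- The double series converges absolutely: `i * (j + 1) ≥ i + j` for `i ≥ 1`, and `a 0 = 0`.
lemma lambert_tsum_comm {a b r s : ℕ → ℝ} {k : ℕ} {x : ℝ} (hk : k ≠ 0) (hx : |x| < 1)
    (ha : ∀ i, |a i| ≤ (i : ℝ) ^ k) (hb : ∀ j, |b j| ≤ (j : ℝ) + 1)
    (hr : ∀ i, HasSum (fun j => a i * b j * x ^ (i * (j + 1))) (r i))
    (hs : ∀ j, HasSum (fun i => a i * b j * x ^ (i * (j + 1))) (s j)) :
    ∑' i, r i = ∑' j, s j := by
  have hx' : ‖|x|‖ < 1 := by simpa using hx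
  have hmajorant : Summable fun p : ℕ × ℕ =>
      ((p.1 : ℝ) ^ k * |x| ^ p.1) * (((p.2 : ℝ) + 1) * |x| ^ p.2) := by
    refine Summable.mul_of_nonneg (f := fun i : ℕ => (i : ℝ) ^ k * |x| ^ i)
      (g := fun j : ℕ => ((j : ℝ) + 1) * |x| ^ j)
      (summable_pow_mul_geometric_of_norm_lt_one k hx') ?_
      (fun _ => by positivity) (fun _ => by positivity)
    have := (hasSum_choose_mul_geometric_of_norm_lt_one 1 hx').summable
    simp only [Nat.choose_one_right, Nat.cast_add, Nat.cast_one] at this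
    exact this
  have hsum : Summable (Function.uncurry fun i j => a i * b j * x ^ (i * (j + 1))) := by
    refine hmajorant.of_norm_bounded fun ⟨i, j⟩ => ?_
    rcases Nat.eq_zero_or_pos i with rfl | hi
    · have : a 0 = 0 := abs_nonpos_iff.mp (by simpa [hk] using ha 0)
      simp [this, hk]
    · have hij : i + j ≤ i * (j + 1) := by nlinarith
      calc ‖a i * b j * x ^ (i * (j + 1))‖ = |a i| * |b j| * |x| ^ (i * (j + 1)) := by
            simp
        _ ≤ (i : ℝ) ^ k * ((j : ℝ) + 1) * |x| ^ (i + j) :=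
            mul_le_mul (mul_le_mul (ha i) (hb j) (abs_nonneg _) (by positivity))
              (pow_le_pow_of_le_one (abs_nonneg x) hx.le hij) (by positivity) (by positivity)
        _ = ((i : ℝ) ^ k * |x| ^ i) * (((j : ℝ) + 1) * |x| ^ j) := by ring
  calc ∑' i, r i = ∑' i, ∑' j, a i * b j * x ^ (i * (j + 1)) :=
        tsum_congr fun i => (hr i).tsum_eq.symm
    _ = ∑' j, ∑' i, a i * b j * x ^ (i * (j + 1)) :=
        (hsum.tsum_comm' (fun i => (hr i).summable) (fun j => (hs j).summable)).symm
    _ = ∑' j, s j := tsum_congr fun j => (hs j).tsum_eq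

lemma norm_pow_lt_one_of_abs_lt_one {x : ℝ} (hx : |x| < 1) {m : ℕ} (hm : m ≠ 0) :
    ‖x ^ m‖ < 1 := by
  rw [norm_pow, Real.norm_eq_abs]
  exact pow_lt_one₀ (abs_nonneg x) hx hm

theorem tsum_parityTerm_one_eq {x : ℝ} (hx : |x| < 1) :
    ∑' i, parityTerm 1 x i = ∑' j : ℕ, (-1) ^ j * (x ^ (j + 1) / (1 - x ^ (j + 1)) ^ 2) := by
  refine lambert_tsum_comm (a := fun i => (i : ℝ)) (b := fun j => (-1) ^ j) one_ne_zero
    hx (by simp) (by simp) (fun i => ?_) (fun j => ?_)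
  · rcases Nat.eq_zero_or_pos i with rfl | hi
    · simp [parityTerm]
    have hgeom := (hasSum_geometric_of_norm_lt_one (ξ := -x ^ i) (by
      simpa using norm_pow_lt_one_of_abs_lt_one hx hi.ne')).mul_left
      ((i : ℝ) * x ^ i)
    rw [show parityTerm 1 x i = (i : ℝ) * x ^ i * (1 - -x ^ i)⁻¹ by
      simp [parityTerm, div_eq_mul_inv, sub_neg_eq_add]]
    refine hgeom.congr_fun fun j => ?_
    rw [neg_pow (x ^ i), ← pow_mul, Nat.mul_succ, pow_add]
    ring
  · have := (hasSum_coe_mul_geometric_of_norm_lt_one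
      (norm_pow_lt_one_of_abs_lt_one hx j.succ_ne_zero)).mul_left ((-1 : ℝ) ^ j)
    refine this.congr_fun fun i => ?_
    rw [← pow_mul, mul_comm (j + 1) i]
    ring

theorem tsum_parityTerm_two_eq {x : ℝ} (hx : |x| < 1) :
    ∑' i, parityTerm 2 x i = ∑' j : ℕ, (-1) ^ j * ((j + 1) *
      (x ^ (j + 1) * (1 + x ^ (j + 1)) / (1 - x ^ (j + 1)) ^ 3)) := by
  refine lambert_tsum_comm (a := fun i => (i : ℝ) ^ 2)
    (b := fun j => (-1) ^ j * ((j : ℝ) + 1)) two_ne_zero hx (by simp)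
    (fun j => by simp [abs_mul, abs_of_nonneg (by positivity : (0 : ℝ) ≤ j + 1)])
    (fun i => ?_) (fun j => ?_)
  · rcases Nat.eq_zero_or_pos i with rfl | hi
    · simp [parityTerm]
    have hgeom := (hasSum_choose_mul_geometric_of_norm_lt_one 1 (r := -x ^ i) (by
      simpa using norm_pow_lt_one_of_abs_lt_one hx hi.ne')).mul_left
      ((i : ℝ) ^ 2 * x ^ i)
    rw [show parityTerm 2 x i = (i : ℝ) ^ 2 * x ^ i * (1 / (1 - -x ^ i) ^ (1 + 1)) by
      simp [parityTerm, div_eq_mul_inv, sub_neg_eq_add]]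
    refine hgeom.congr_fun fun j => ?_
    rw [Nat.choose_one_right, neg_pow (x ^ i), ← pow_mul, Nat.mul_succ, pow_add]
    push_cast
    ring
  · have := ((hasSum_sq_mul_geometric_of_norm_lt_one
      (norm_pow_lt_one_of_abs_lt_one hx j.succ_ne_zero)).mul_left ((j : ℝ) + 1)).mul_left
      ((-1 : ℝ) ^ j)
    refine this.congr_fun fun i => ?_
    rw [← pow_mul, mul_comm (j + 1) i]
    ring

lemma abs_exp_neg_lt_one {t : ℝ} (ht : 0 < t) : |exp (-t)| < 1 := by
  rw [abs_of_pos (exp_pos _)]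
  exact exp_lt_one_iff.mpr (neg_lt_zero.mpr ht)

lemma tendsto_exp_neg_nhdsGT_zero : Tendsto (fun t => exp (-t)) (𝓝[>] 0) (𝓝 1) := by
  simpa using ((by fun_prop : Continuous fun t : ℝ => exp (-t)).tendsto 0).mono_left
    nhdsWithin_le_nhds

lemma tendsto_tsum_neg_one_pow_div_succ_sq_mul {ψ : ℝ → ℝ} {C L : ℝ}
    (hψ : ∀ t > 0, |ψ t| ≤ C) (hL : Tendsto ψ (𝓝[>] 0) (𝓝 L)) :
    Tendsto (fun ε => ∑' j : ℕ, (-1) ^ j / ((j : ℝ) + 1) ^ 2 * ψ (((j : ℝ) + 1) * ε))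
      (𝓝[>] 0) (𝓝 (π ^ 2 / 12 * L)) := by
  rw [← (hasSum_neg_one_pow_div_succ_sq.mul_right L).tsum_eq]
  refine tendsto_tsum_of_dominated_convergence (hasSum_one_div_succ_sq.summable.mul_left C)
    (fun j => (hL.comp ?_).const_mul _) ?_
  · have hj : (0 : ℝ) < j + 1 := by positivity
    refine tendsto_nhdsWithin_iff.mpr ⟨?_, ?_⟩
    · simpa using ((continuous_const_mul ((j : ℝ) + 1)).tendsto 0).mono_left
        (nhdsWithin_le_nhds (s := Set.Ioi 0))
    · filter_upwards [self_mem_nhdsWithin] with ε hε using mul_pos hj hε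
  · filter_upwards [self_mem_nhdsWithin] with ε hε j
    have hj : (0 : ℝ) < j + 1 := by positivity
    rw [norm_mul, norm_div, norm_pow, norm_neg, norm_one, one_pow, Real.norm_eq_abs,
      Real.norm_eq_abs, abs_of_pos (by positivity : (0 : ℝ) < ((j : ℝ) + 1) ^ 2), mul_comm C,
      one_div]
    exact mul_le_mul_of_nonneg_left (hψ _ (mul_pos hj hε)) (by positivity)

theorem tendsto_sq_mul_tsum_parityTerm_one :
    Tendsto (fun ε => ε ^ 2 * ∑' i, parityTerm 1 (exp (-ε)) i) (𝓝[>] 0) (𝓝 (π ^ 2 / 12)) := by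
  have hexp := tendsto_exp_neg_nhdsGT_zero
  have key := tendsto_tsum_neg_one_pow_div_succ_sq_mul (C := 2)
    (ψ := fun t => (t / (1 - exp (-t))) ^ 2 * exp (-t)) (fun t ht => ?_)
    ((tendsto_div_one_sub_exp_neg.pow 2).mul hexp)
  · rw [one_pow, one_mul, mul_one] at key
    refine key.congr' ?_
    filter_upwards [self_mem_nhdsWithin] with ε hε
    rw [tsum_parityTerm_one_eq (abs_exp_neg_lt_one hε), ← tsum_mul_left]
    refine tsum_congr fun j => ?_
    rw [← Real.exp_nat_mul]
    have := one_sub_exp_neg_pos (mul_pos (by positivity : (0 : ℝ) < j + 1) hε)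
    push_cast
    field_simp
  · have hψ : 0 ≤ t / (1 - exp (-t)) := zero_le_one.trans (one_le_div_one_sub_exp_neg ht)
    rw [abs_of_nonneg (by positivity)]
    calc (t / (1 - exp (-t))) ^ 2 * exp (-t) ≤ (1 + t) ^ 2 * exp (-t) := by
          gcongr; exact div_one_sub_exp_neg_le ht
      _ ≤ 2 := by simpa using one_add_pow_mul_exp_neg_le 2 ht.le

theorem tendsto_cube_mul_tsum_parityTerm_two :
    Tendsto (fun ε => ε ^ 3 * ∑' i, parityTerm 2 (exp (-ε)) i) (𝓝[>] 0) (𝓝 (π ^ 2 / 6)) := by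
  have hexp := tendsto_exp_neg_nhdsGT_zero
  have key := tendsto_tsum_neg_one_pow_div_succ_sq_mul (C := 12)
    (ψ := fun t => (t / (1 - exp (-t))) ^ 3 * (exp (-t) * (1 + exp (-t)))) (fun t ht => ?_)
    ((tendsto_div_one_sub_exp_neg.pow 3).mul (hexp.mul (tendsto_const_nhds.add hexp)))
  · rw [show π ^ 2 / 12 * (1 ^ 3 * (1 * (1 + 1))) = π ^ 2 / 6 by ring] at key
    refine key.congr' ?_
    filter_upwards [self_mem_nhdsWithin] with ε hε
    rw [tsum_parityTerm_two_eq (abs_exp_neg_lt_one hε), ← tsum_mul_left]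
    refine tsum_congr fun j => ?_
    rw [← Real.exp_nat_mul]
    have := one_sub_exp_neg_pos (mul_pos (by positivity : (0 : ℝ) < j + 1) hε)
    push_cast
    field_simp
  · have hψ : 0 ≤ t / (1 - exp (-t)) := zero_le_one.trans (one_le_div_one_sub_exp_neg ht)
    have hexp_le : exp (-t) ≤ 1 := (abs_exp_neg_lt_one ht).le.trans' (le_abs_self _)
    rw [abs_of_nonneg (by positivity)]
    calc (t / (1 - exp (-t))) ^ 3 * (exp (-t) * (1 + exp (-t)))
        ≤ (1 + t) ^ 3 * exp (-t) * 2 := by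
          rw [← mul_assoc]
          gcongr
          · exact div_one_sub_exp_neg_le ht
          · linarith
      _ ≤ 12 := by
          have : (1 + t) ^ 3 * exp (-t) ≤ 6 := by
            simpa [Nat.factorial] using one_add_pow_mul_exp_neg_le 3 ht.le
          linarith

lemma tsum_pow_mul_geometric_le (k : ℕ) {x : ℝ} (hx0 : 0 ≤ x) (hx1 : x < 1) :
    ∑' i : ℕ, (i : ℝ) ^ k * x ^ i ≤ k ! / (1 - x) ^ (k + 1) := by
  have hx : ‖x‖ < 1 := by rwa [Real.norm_of_nonneg hx0]
  have hchoose := (hasSum_choose_mul_geometric_of_norm_lt_one k hx).mul_left (k ! : ℝ)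
  rw [mul_one_div] at hchoose
  refine hasSum_le (fun i => ?_) (summable_pow_mul_geometric_of_norm_lt_one k hx).hasSum hchoose
  have h := Nat.pow_le_choose (α := ℝ) k (i + k)
  rw [show i + k + 1 - k = i + 1 by omega, div_le_iff₀ (by positivity)] at h
  calc (i : ℝ) ^ k * x ^ i ≤ ((i + 1 : ℕ) : ℝ) ^ k * x ^ i := by gcongr; linarith
    _ ≤ _ := by rw [← mul_assoc, mul_comm (k ! : ℝ)]; gcongr

lemma tsum_parityTerm_nat_add_le (k : ℕ) {x : ℝ} (hx0 : 0 ≤ x) (hx1 : x < 1) (n : ℕ) :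
    ∑' i, parityTerm k x (i + (n + 1)) ≤ (k + 1)! / ((n + 1) * (1 - x) ^ (k + 2)) := by
  set g : ℕ → ℝ := fun i => (i : ℝ) ^ (k + 1) * x ^ i
  have hg : Summable g :=
    summable_pow_mul_geometric_of_norm_lt_one _ (by rwa [Real.norm_of_nonneg hx0])
  -- Markov's trick: beyond `n` the extra factor `i / (n + 1)` is at least one.
  have hterm : ∀ i, parityTerm k x (i + (n + 1)) ≤ g (i + (n + 1)) / (n + 1) := by
    intro i
    refine (parityTerm_le k hx0 _).trans ?_
    rw [le_div_iff₀ (by positivity)]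
    simp only [g, pow_succ, Nat.cast_add, Nat.cast_one]
    have : (n : ℝ) + 1 ≤ i + (n + 1) := by linarith [(i.cast_nonneg : (0 : ℝ) ≤ i)]
    rw [mul_right_comm]
    gcongr
  calc ∑' i, parityTerm k x (i + (n + 1)) ≤ ∑' i, g (i + (n + 1)) / (n + 1) :=
        Summable.tsum_le_tsum hterm ((summable_nat_add_iff _).2 (summable_parityTerm k hx0 hx1))
          (((summable_nat_add_iff _).2 hg).div_const _)
    _ = (∑' i, g (i + (n + 1))) / (n + 1) := tsum_div_const
    _ ≤ (∑' i, g i) / (n + 1) := by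
        refine div_le_div_of_nonneg_right ?_ (by positivity)
        rw [← hg.sum_add_tsum_nat_add (n + 1)]
        exact le_add_of_nonneg_left (Finset.sum_nonneg fun i _ => by positivity)
    _ ≤ (k + 1)! / (1 - x) ^ (k + 2) / (n + 1) := by
        gcongr
        exact tsum_pow_mul_geometric_le (k + 1) hx0 hx1
    _ = _ := by rw [div_div, mul_comm]

lemma tsum_parityTerm_sub_sum_Icc_le (k : ℕ) {x : ℝ} (hx0 : 0 ≤ x) (hx1 : x < 1) {n : ℕ}
    (hn : 1 ≤ n) :
    ∑' i, parityTerm k x i - ∑ i ∈ Finset.Icc 2 n, parityTerm k x i ≤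
      2 + (k + 1)! / ((n + 1) * (1 - x) ^ (k + 2)) := by
  have hsplit : ∑ i ∈ Finset.range (n + 1), parityTerm k x i =
      parityTerm k x 0 + parityTerm k x 1 + ∑ i ∈ Finset.Icc 2 n, parityTerm k x i := by
    rw [Finset.range_eq_Ico, ← Finset.sum_Ico_consecutive _ (zero_le 2) (by omega : 2 ≤ n + 1),
      Finset.Ico_add_one_right_eq_Icc]
    simp [Finset.sum_range_succ]
  have hle_one : ∀ i ≤ 1, parityTerm k x i ≤ 1 := by
    intro i hi
    refine (parityTerm_le k hx0 i).trans ?_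
    interval_cases i
    · simpa using pow_le_one₀ le_rfl zero_le_one
    · simpa using hx1.le
  rw [← (summable_parityTerm k hx0 hx1).sum_add_tsum_nat_add (n + 1), hsplit]
  linarith [hle_one 0 (zero_le _), hle_one 1 le_rfl, tsum_parityTerm_nat_add_le k hx0 hx1 n]

lemma pow_mul_tsum_parityTerm_sub_sum_Icc_le (k : ℕ) {ε : ℝ} (hε : 0 < ε) {n : ℕ} (hn : 1 ≤ n) :
    ε ^ (k + 1) * (∑' i, parityTerm k (exp (-ε)) i -
      ∑ i ∈ Finset.Icc 2 n, parityTerm k (exp (-ε)) i) ≤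
      2 * ε ^ (k + 1) + (k + 1)! * (1 + ε) ^ (k + 2) / ((n + 1) * ε) := by
  have hx1 : exp (-ε) < 1 := exp_lt_one_iff.mpr (neg_lt_zero.mpr hε)
  have hgap := one_sub_exp_neg_pos hε
  have hratio : (ε / (1 - exp (-ε))) ^ (k + 2) ≤ (1 + ε) ^ (k + 2) :=
    pow_le_pow_left₀ (by positivity) (div_one_sub_exp_neg_le hε) _
  calc ε ^ (k + 1) * (∑' i, parityTerm k (exp (-ε)) i -
        ∑ i ∈ Finset.Icc 2 n, parityTerm k (exp (-ε)) i)
      ≤ ε ^ (k + 1) * (2 + (k + 1)! / ((n + 1) * (1 - exp (-ε)) ^ (k + 2))) :=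
        mul_le_mul_of_nonneg_left
          (tsum_parityTerm_sub_sum_Icc_le k (exp_pos _).le hx1 hn) (by positivity)
    _ = 2 * ε ^ (k + 1) + (k + 1)! * (ε / (1 - exp (-ε))) ^ (k + 2) / ((n + 1) * ε) := by
        have := hgap.ne'
        rw [div_pow]
        field_simp
        ring
    _ ≤ 2 * ε ^ (k + 1) + (k + 1)! * (1 + ε) ^ (k + 2) / ((n + 1) * ε) := by gcongr

lemma tendsto_div_sqrt_natCast {c : ℝ} (hc : 0 < c) :
    Tendsto (fun n : ℕ => c / √n) atTop (𝓝[>] 0) := by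
  refine tendsto_nhdsWithin_iff.mpr ⟨tendsto_const_nhds.div_atTop
    (tendsto_sqrt_atTop.comp tendsto_natCast_atTop_atTop), ?_⟩
  filter_upwards [eventually_ge_atTop 1] with n hn
  exact div_pos hc (sqrt_pos.mpr (by exact_mod_cast hn))

theorem tendsto_pow_mul_sum_Icc_parityTerm {k : ℕ} {c L : ℝ} (hc : 0 < c)
    (h : Tendsto (fun ε => ε ^ (k + 1) * ∑' i, parityTerm k (exp (-ε)) i) (𝓝[>] 0) (𝓝 L)) :
    Tendsto (fun n : ℕ => (c / √n) ^ (k + 1) *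
      ∑ i ∈ Finset.Icc 2 n, parityTerm k (exp (-(c / √n))) i) atTop (𝓝 L) := by
  have hε := tendsto_div_sqrt_natCast hc
  set E : ℝ → ℝ := fun ε => 2 * ε ^ (k + 1) + (k + 1)! * (1 + ε) ^ (k + 2) * ε / c ^ 2
  have hE : Tendsto (fun n : ℕ => E (c / √n)) atTop (𝓝 0) := by
    have := ((by fun_prop : Continuous E).tendsto 0).comp (hε.mono_right nhdsWithin_le_nhds)
    simpa [E, Function.comp_def] using this
  have hεpos : ∀ᶠ n : ℕ in atTop, 0 < c / √n := (tendsto_nhdsWithin_iff.mp hε).2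
  have herr : Tendsto (fun n : ℕ => (c / √n) ^ (k + 1) *
      (∑' i, parityTerm k (exp (-(c / √n))) i -
        ∑ i ∈ Finset.Icc 2 n, parityTerm k (exp (-(c / √n))) i)) atTop (𝓝 0) := by
    refine squeeze_zero' ?_ ?_ hE
    · filter_upwards [hεpos] with n hεn
      have hx1 : exp (-(c / √n)) < 1 := exp_lt_one_iff.mpr (neg_lt_zero.mpr hεn)
      exact mul_nonneg (by positivity) (sub_nonneg.mpr
        ((summable_parityTerm k (exp_pos _).le hx1).sum_le_tsum _
          fun i _ => parityTerm_nonneg k (exp_pos _).le i))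
    filter_upwards [hεpos, eventually_ge_atTop 1] with n hεn hn
    refine (pow_mul_tsum_parityTerm_sub_sum_Icc_le k hεn hn).trans ?_
    have hinv : 1 / ((n + 1) * (c / √n)) ≤ c / √n / c ^ 2 := by
      have hεn2 : (c / √n) ^ 2 * n = c ^ 2 := by
        rw [div_pow, sq_sqrt (Nat.cast_nonneg n)]
        field_simp
      rw [div_le_div_iff₀ (by positivity) (by positivity)]
      nlinarith
    calc _ = 2 * (c / √n) ^ (k + 1) +
          (k + 1)! * (1 + c / √n) ^ (k + 2) * (1 / ((n + 1) * (c / √n))) := by ring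
      _ ≤ E (c / √n) := by
        simp only [E]
        rw [mul_div_assoc]
        gcongr
  have hmain := (h.comp hε).sub herr
  rw [sub_zero] at hmain
  refine hmain.congr fun n => ?_
  simp only [Function.comp_apply]
  ring

/-- **Mean and variance asymptotics for the parity-bit proposal `T_A`.**
With `c = π/√6` and `x(n) = exp(-c/√n)`:
`(1/n)·Σ_{i=2}^n i·x^i/(1+x^i) → 1/2` and
`(1/n^{3/2})·Σ_{i=2}^n i²·x^i/(1+x^i)² → 1/c`,
i.e. for independent Bernoulli `ε_i` with `P(ε_i = 1) = x^i/(1+x^i)` and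
`T_A = Σ_{i=2}^n i·ε_i` one has `E T_A ∼ n/2` and `Var T_A ∼ (1/c)·n^{3/2}`. -/
theorem parity_proposal_mean_var_asymptotics :
    Tendsto (fun n : ℕ =>
        (1 / (n : ℝ)) * ∑ i ∈ Finset.Icc 2 n,
          (i : ℝ) * fristedtX n ^ i / (1 + fristedtX n ^ i))
      atTop (nhds (1 / 2)) ∧
    Tendsto (fun n : ℕ =>
        (1 / (n : ℝ) ^ ((3 : ℝ) / 2)) * ∑ i ∈ Finset.Icc 2 n,
          (i : ℝ) ^ 2 * fristedtX n ^ i / (1 + fristedtX n ^ i) ^ 2)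
      atTop (nhds (1 / (Real.pi / Real.sqrt 6))) := by
  set c := π / √6 with hc_def
  have hc : 0 < c := by positivity
  have hc2 : c ^ 2 = π ^ 2 / 6 := by rw [hc_def, div_pow, sq_sqrt (by norm_num)]
  have hx : ∀ n : ℕ, exp (-(c / √n)) = fristedtX n := fun n => by rw [fristedtX, neg_div]
  have hsqrt3 : ∀ n : ℕ, √(n : ℝ) ^ 3 = (n : ℝ) ^ ((3 : ℝ) / 2) := fun n => by
    rw [sqrt_eq_rpow, ← rpow_natCast, ← rpow_mul (Nat.cast_nonneg n)]; norm_num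
  constructor
  · have h := (tendsto_pow_mul_sum_Icc_parityTerm hc tendsto_sq_mul_tsum_parityTerm_one).const_mul
      (c ^ 2)⁻¹
    rw [show (c ^ 2)⁻¹ * (π ^ 2 / 12) = 1 / 2 by rw [hc2]; field_simp; norm_num] at h
    refine h.congr fun n => ?_
    simp only [parityTerm, hx, pow_one, Nat.reduceAdd, div_pow, sq_sqrt (Nat.cast_nonneg n)]
    field_simp
  · have h := (tendsto_pow_mul_sum_Icc_parityTerm hc tendsto_cube_mul_tsum_parityTerm_two).const_mul
      (c ^ 3)⁻¹
    rw [← hc2, show (c ^ 3)⁻¹ * c ^ 2 = 1 / c by field_simp] at h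
    refine h.congr fun n => ?_
    simp only [parityTerm, hx, Nat.reduceAdd, div_pow, hsqrt3]
    field_simp
end

section
/- Let (Ω, P) be a probability space carrying mutually independent random elements A_1, A_2, … (each with law μ on a measurable space α) and B_1, B_2, … (each with law ν on a measurable space β). Let h : α × β → {0,1} be measurable with p := E h(A_1, B_1) ∈ (0,1], let g : α × β → ℝ be bounded and measurable, and set E g(S) := E[g(A_1,B_1)·h(A_1,B_1)]/p. For m₁, m₂ ≥ 1 define G(m₁,m₂) = Σ_{1≤i≤m₁, 1≤j≤m₂} g(A_i,B_j)·h(A_i,B_j) and W(m₁,m₂) = Σ_{1≤i≤m₁, 1≤j≤m₂} h(A_i,B_j). Then G(m₁,m₂)/W(m₁,m₂) → E g(S) in probability as min(m₁,m₂) → ∞: for every ε > 0, P(W(m₁,m₂) > 0 and |G(m₁,m₂)/W(m₁,m₂) − E g(S)| ≤ ε) → 1. -/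
open MeasureTheory ProbabilityTheory Filter

universe u v

def pdcSumFam (α β : Type u) : ℕ ⊕ ℕ → Type u := fun k => Sum.elim (fun _ => α) (fun _ => β) k

def pdcSumMS {α β : Type u} [mα : MeasurableSpace α] [mβ : MeasurableSpace β] :
    ∀ k, MeasurableSpace (pdcSumFam α β k)
  | .inl _ => mα
  | .inr _ => mβ

def pdcSumFun {Ω : Type v} {α β : Type u} (A : ℕ → Ω → α) (B : ℕ → Ω → β) :
    ∀ k, Ω → pdcSumFam α β k
  | .inl i => A i
  | .inr j => B j

/-!
`G` and `W` are two-sample U-statistics: sums over the `m₁ × m₂` grid of a bounded function of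
`(A i, B j)`. Two grid cells give independent terms unless they share a row or a column, so the
variance of such a sum is `O(m₁ m₂ (m₁ + m₂))`, and Chebyshev's inequality yields a weak law of
large numbers: `G / (m₁ m₂) → E[g h]` and `W / (m₁ m₂) → p` in probability. Since `p > 0`,
continuity of division at `(E[g h], p)` turns this into `G / W → E[g h] / p`.
-/

open Topology Finset

section

variable {Ω : Type*} [MeasurableSpace Ω] {μ : Measure Ω}

lemma abs_integral_le_of_abs_le [IsProbabilityMeasure μ] {X : Ω → ℝ} {C : ℝ}
    (hXC : ∀ ω, |X ω| ≤ C) : |μ[X]| ≤ C := by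
  simpa using norm_integral_le_of_norm_le_const (μ := μ)
    (ae_of_all _ fun ω => (Real.norm_eq_abs _).trans_le (hXC ω))

lemma abs_covariance_le_of_abs_le [IsProbabilityMeasure μ] {X Y : Ω → ℝ} {C : ℝ}
    (hXC : ∀ ω, |X ω| ≤ C) (hYC : ∀ ω, |Y ω| ≤ C) : |cov[X, Y; μ]| ≤ (2 * C) ^ 2 := by
  have hcent {Z : Ω → ℝ} (hZC : ∀ ω, |Z ω| ≤ C) (ω : Ω) : |Z ω - μ[Z]| ≤ 2 * C :=
    (abs_sub _ _).trans (by linarith [hZC ω, abs_integral_le_of_abs_le (μ := μ) hZC])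
  rw [sq, covariance]
  refine abs_integral_le_of_abs_le fun ω => ?_
  rw [abs_mul]
  exact mul_le_mul (hcent hXC ω) (hcent hYC ω) (abs_nonneg _)
    ((abs_nonneg _).trans (hcent hXC ω))

lemma variance_sum_sum_le [IsFiniteMeasure μ] {ι κ : Type*} {X : ι → κ → Ω → ℝ}
    (hX : ∀ i j, MemLp (X i j) 2 μ) {c : ℝ} (hc : ∀ i j k l, |cov[X i j, X k l; μ]| ≤ c)
    (h0 : ∀ i j k l, i ≠ k → j ≠ l → cov[X i j, X k l; μ] = 0) (s : Finset ι) (t : Finset κ) :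
    Var[fun ω => ∑ i ∈ s, ∑ j ∈ t, X i j ω; μ] ≤ c * (#s * #t) * (#s + #t) := by
  classical
  have hcross (q : ι × κ) :
      ∑ r ∈ s ×ˢ t, cov[X q.1 q.2, X r.1 r.2; μ] ≤ (#t + #s) * c := by
    have hc0 : 0 ≤ c := (abs_nonneg _).trans (hc q.1 q.2 q.1 q.2)
    calc ∑ r ∈ s ×ˢ t, cov[X q.1 q.2, X r.1 r.2; μ]
        ≤ ∑ r ∈ s ×ˢ t, ((if q.1 = r.1 then c else 0) + (if q.2 = r.2 then c else 0)) := by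
          gcongr with r
          by_cases h1 : q.1 = r.1
          · rw [if_pos h1]
            refine (le_abs_self _).trans ((hc ..).trans (le_add_of_nonneg_right ?_))
            split_ifs <;> simp [hc0]
          by_cases h2 : q.2 = r.2
          · simp only [h1, h2, if_true, if_false, zero_add]
            exact (le_abs_self _).trans (hc ..)
          simp [h1, h2, h0 _ _ _ _ h1 h2]
      _ ≤ (#t + #s) * c := by
          rw [sum_add_distrib, sum_product, sum_product, sum_comm (s := s)]
          simp only [sum_ite_eq, sum_const, nsmul_eq_mul, add_mul]
          gcongr <;> split_ifs <;> simp [hc0]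
  calc Var[fun ω => ∑ i ∈ s, ∑ j ∈ t, X i j ω; μ]
      = ∑ q ∈ s ×ˢ t, ∑ r ∈ s ×ˢ t, cov[X q.1 q.2, X r.1 r.2; μ] := by
        rw [← variance_fun_sum' fun q _ => hX q.1 q.2]
        simp_rw [sum_product]
    _ ≤ ∑ q ∈ s ×ˢ t, (#t + #s) * c := sum_le_sum fun q _ => hcross q
    _ = c * (#s * #t) * (#s + #t) := by
        simp only [sum_const, card_product, nsmul_eq_mul, Nat.cast_mul]; ring

theorem tendstoInMeasure_sum_sum_div [IsProbabilityMeasure μ] {X : ℕ → ℕ → Ω → ℝ} {C a : ℝ}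
    (hXm : ∀ i j, AEStronglyMeasurable (X i j) μ) (hXC : ∀ i j ω, |X i j ω| ≤ C)
    (hmean : ∀ i j, μ[X i j] = a)
    (hindep : ∀ i j k l, i ≠ k → j ≠ l → IndepFun (X i j) (X k l) μ) :
    TendstoInMeasure μ
      (fun (m : ℕ × ℕ) ω => (∑ i ∈ range m.1, ∑ j ∈ range m.2, X i j ω) / (m.1 * m.2))
      atTop fun _ => a := by
  have hL2 (i j : ℕ) : MemLp (X i j) 2 μ :=
    MemLp.of_bound (hXm i j) C (ae_of_all _ fun ω => (Real.norm_eq_abs _).trans_le (hXC i j ω))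
  set S : ℕ × ℕ → Ω → ℝ := fun m ω => ∑ i ∈ range m.1, ∑ j ∈ range m.2, X i j ω
  have hS_L2 (m : ℕ × ℕ) : MemLp (S m) 2 μ :=
    memLp_finsetSum _ fun i _ => memLp_finsetSum _ fun j _ => hL2 i j
  have hS_mean (m : ℕ × ℕ) : μ[S m] = m.1 * m.2 * a := by
    have hint (i j : ℕ) : Integrable (X i j) μ := (hL2 i j).integrable one_le_two
    simp only [S]
    rw [integral_finsetSum _ fun i _ => integrable_finsetSum _ fun j _ => hint i j]
    simp_rw [integral_finsetSum _ fun j _ => hint _ j, hmean]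
    simp only [sum_const, card_range, nsmul_eq_mul]
    ring
  have hS_var (m : ℕ × ℕ) : Var[S m; μ] ≤ (2 * C) ^ 2 * (m.1 * m.2) * (m.1 + m.2) := by
    simpa using variance_sum_sum_le hL2
      (fun i j k l => abs_covariance_le_of_abs_le (hXC i j) (hXC k l))
      (fun i j k l hik hjl => (hindep i j k l hik hjl).covariance_eq_zero (hL2 i j) (hL2 k l))
      (range m.1) (range m.2)
  rw [tendstoInMeasure_iff_dist]
  intro δ hδ
  have hcheb (m : ℕ × ℕ) (hm : 1 ≤ m) : μ {ω | δ ≤ dist (S m ω / (m.1 * m.2)) a}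
      ≤ ENNReal.ofReal ((2 * C) ^ 2 / δ ^ 2 * (1 / m.1 + 1 / m.2)) := by
    obtain ⟨h₁, h₂⟩ := hm
    have hm₁ : (0 : ℝ) < m.1 := by exact_mod_cast h₁
    have hm₂ : (0 : ℝ) < m.2 := by exact_mod_cast h₂
    have hN : (0 : ℝ) < m.1 * m.2 := by positivity
    have hset : {ω | δ ≤ dist (S m ω / (m.1 * m.2)) a}
        = {ω | δ * (m.1 * m.2) ≤ |S m ω - μ[S m]|} := by
      ext ω
      have : S m ω / (m.1 * m.2) - a = (S m ω - μ[S m]) / (m.1 * m.2) := by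
        rw [hS_mean, sub_div, mul_div_cancel_left₀ _ hN.ne']
      simp only [Set.mem_ofPred_eq, Real.dist_eq, this, abs_div, abs_of_pos hN, le_div_iff₀ hN]
    calc μ {ω | δ ≤ dist (S m ω / (m.1 * m.2)) a}
        ≤ ENNReal.ofReal (Var[S m; μ] / (δ * (m.1 * m.2)) ^ 2) :=
          hset ▸ meas_ge_le_variance_div_sq (hS_L2 m) (by positivity)
      _ ≤ ENNReal.ofReal ((2 * C) ^ 2 / δ ^ 2 * (1 / m.1 + 1 / m.2)) := by
          refine ENNReal.ofReal_le_ofReal ?_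
          calc Var[S m; μ] / (δ * (m.1 * m.2)) ^ 2
              ≤ (2 * C) ^ 2 * (m.1 * m.2) * (m.1 + m.2) / (δ * (m.1 * m.2)) ^ 2 := by
                gcongr; exact hS_var m
            _ = (2 * C) ^ 2 / δ ^ 2 * (1 / m.1 + 1 / m.2) := by
                field_simp
                ring
  have hbound : Tendsto (fun m : ℕ × ℕ => (2 * C) ^ 2 / δ ^ 2 * (1 / m.1 + 1 / m.2 : ℝ))
      atTop (𝓝 0) := by
    have hfst := tendsto_fst.mono_left (prod_atTop_atTop_eq (α := ℕ) (β := ℕ)).ge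
    have hsnd := tendsto_snd.mono_left (prod_atTop_atTop_eq (α := ℕ) (β := ℕ)).ge
    have := ((tendsto_one_div_atTop_nhds_zero_nat.comp hfst).add
      (tendsto_one_div_atTop_nhds_zero_nat.comp hsnd)).const_mul ((2 * C) ^ 2 / δ ^ 2)
    rwa [add_zero, mul_zero] at this
  refine tendsto_of_tendsto_of_tendsto_of_le_of_le' tendsto_const_nhds
    (ENNReal.ofReal_zero ▸ ENNReal.tendsto_ofReal hbound) (Eventually.of_forall fun _ => zero_le)
    ((eventually_ge_atTop 1).mono hcheb)

theorem tendsto_measure_div_of_tendstoInMeasure [IsProbabilityMeasure μ] {ι : Type*}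
    {l : Filter ι} {X Y : ι → Ω → ℝ} {N : ι → ℝ} (hN : ∀ i, 0 ≤ N i) {a b : ℝ} (hb : 0 < b)
    (hX : TendstoInMeasure μ (fun i ω => X i ω / N i) l fun _ => a)
    (hY : TendstoInMeasure μ (fun i ω => Y i ω / N i) l fun _ => b) {ε : ℝ} (hε : 0 < ε) :
    Tendsto (fun i => μ {ω | 0 < Y i ω ∧ |X i ω / Y i ω - a / b| ≤ ε}) l (𝓝 1) := by
  obtain ⟨δ, hδ, hdiv⟩ : ∃ δ > 0, ∀ x y : ℝ, dist x a < δ → dist y b < δ →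
      0 < y ∧ |x / y - a / b| ≤ ε := by
    have hev : ∀ᶠ z : ℝ × ℝ in 𝓝 (a, b), 0 < z.2 ∧ |z.1 / z.2 - a / b| ≤ ε :=
      (continuousAt_snd.eventually (lt_mem_nhds hb)).and
        ((continuousAt_fst.div continuousAt_snd hb.ne').eventually
          (Metric.closedBall_mem_nhds _ hε))
    obtain ⟨δ, hδ, h⟩ := Metric.eventually_nhds_iff.mp hev
    exact ⟨δ, hδ, fun x y hx hy => @h (x, y) (by rw [Prod.dist_eq]; exact max_lt hx hy)⟩
  set bad : ι → Set Ω := fun i =>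
    {ω | δ ≤ dist (X i ω / N i) a} ∪ {ω | δ ≤ dist (Y i ω / N i) b}
  have hbad : Tendsto (fun i => μ (bad i)) l (𝓝 0) := by
    rw [tendstoInMeasure_iff_dist] at hX hY
    have hsum := (hX δ hδ).add (hY δ hδ)
    rw [add_zero] at hsum
    exact tendsto_of_tendsto_of_tendsto_of_le_of_le tendsto_const_nhds hsum (fun _ => zero_le)
      (fun _ => measure_union_le _ _)
  have hgood (i : ι) : (bad i)ᶜ ⊆ {ω | 0 < Y i ω ∧ |X i ω / Y i ω - a / b| ≤ ε} := by
    intro ω hω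
    simp only [bad, Set.mem_compl_iff, Set.mem_union, not_or, not_le, Set.mem_ofPred_eq] at hω
    obtain ⟨hYN, hXY⟩ := hdiv _ _ hω.1 hω.2
    -- `N i = 0` would give `Y i ω / N i = 0`, which is not within `δ` of `b`.
    have hNpos : 0 < N i := (hN i).lt_of_ne fun h0 => by simp [← h0] at hYN
    rw [div_div_div_cancel_right₀ hNpos.ne'] at hXY
    exact ⟨(div_pos_iff_of_pos_right hNpos).mp hYN, hXY⟩
  have hlow : Tendsto (fun i => 1 - μ (bad i)) l (𝓝 1) := by
    simpa using ENNReal.Tendsto.sub tendsto_const_nhds hbad (Or.inl ENNReal.one_ne_top)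
  refine tendsto_of_tendsto_of_tendsto_of_le_of_le hlow tendsto_const_nhds (fun i => ?_)
    (fun i => prob_le_one)
  calc 1 - μ (bad i) ≤ μ (bad i)ᶜ :=
        tsub_le_iff_left.mpr (measure_univ (μ := μ) ▸ measure_univ_le_add_compl _)
    _ ≤ _ := measure_mono (hgood i)

end

section Pairs

variable {Ω : Type v} {α β : Type u} [MeasurableSpace Ω] [MeasurableSpace α] [MeasurableSpace β]
  {P : Measure Ω} {A : ℕ → Ω → α} {B : ℕ → Ω → β}

lemma indepFun_prodMk_prodMk_of_ne (hAm : ∀ i, Measurable (A i)) (hBm : ∀ j, Measurable (B j))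
    (hindep : iIndepFun (m := pdcSumMS) (pdcSumFun A B) P) {i j k l : ℕ} (hik : i ≠ k)
    (hjl : j ≠ l) : IndepFun (fun ω => (A i ω, B j ω)) (fun ω => (A k ω, B l ω)) P :=
  hindep.indepFun_prodMk_prodMk (by rintro (i | j); exacts [hAm i, hBm j])
    (.inl i) (.inr j) (.inl k) (.inr l) (by simpa) (by simp) (by simp) (by simpa)

lemma map_prodMk_eq_prod [IsFiniteMeasure P] (hAm : ∀ i, Measurable (A i))
    (hBm : ∀ j, Measurable (B j)) (hindep : iIndepFun (m := pdcSumMS) (pdcSumFun A B) P) (i j : ℕ) :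
    P.map (fun ω => (A i ω, B j ω)) = (P.map (A i)).prod (P.map (B j)) :=
  (indepFun_iff_map_prod_eq_prod_map_map (hAm i).aemeasurable (hBm j).aemeasurable).mp
    (hindep.indepFun (show (Sum.inl i : ℕ ⊕ ℕ) ≠ .inr j by simp))

theorem tendstoInMeasure_sum_sum_comp_div [IsProbabilityMeasure P] {μ : Measure α}
    {ν : Measure β} (hAm : ∀ i, Measurable (A i)) (hBm : ∀ j, Measurable (B j))
    (hindep : iIndepFun (m := pdcSumMS) (pdcSumFun A B) P)
    (hA : ∀ i, P.map (A i) = μ) (hB : ∀ j, P.map (B j) = ν)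
    {f : α × β → ℝ} (hfm : Measurable f) {C : ℝ} (hfC : ∀ z, |f z| ≤ C) :
    TendstoInMeasure P (fun (m : ℕ × ℕ) ω =>
        (∑ i ∈ range m.1, ∑ j ∈ range m.2, f (A i ω, B j ω)) / (m.1 * m.2))
      atTop fun _ => ∫ ω, f (A 0 ω, B 0 ω) ∂P := by
  have hmean (i j : ℕ) : ∫ ω, f (A i ω, B j ω) ∂P = ∫ z, f z ∂(μ.prod ν) := by
    rw [← hA i, ← hB j, ← map_prodMk_eq_prod hAm hBm hindep,
      integral_map ((hAm i).prodMk (hBm j)).aemeasurable hfm.aestronglyMeasurable]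
  exact tendstoInMeasure_sum_sum_div
    (fun i j => (hfm.comp ((hAm i).prodMk (hBm j))).aestronglyMeasurable)
    (fun i j ω => hfC _) (fun i j => (hmean i j).trans (hmean 0 0).symm)
    fun i j k l hik hjl => (indepFun_prodMk_prodMk_of_ne hAm hBm hindep hik hjl).comp hfm hfm

end Pairs

/-- **Consistency of the opportunistic estimator `G/W`.**
Given mutually independent i.i.d. sequences `A_i ~ μ` and `B_j ~ ν`, a
measurable indicator `h` with `p = E h(A,B) ∈ (0,1]`, a bounded measurable `g`,
and `E g(S) = E[g(A,B)h(A,B)]/p`, the total score over matching pairs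
`G(m₁,m₂)` divided by the number of matching pairs `W(m₁,m₂)` converges in
probability to `E g(S)` as `min(m₁,m₂) → ∞`: for every `ε > 0`,
`P(W > 0 and |G/W − E g(S)| ≤ ε) → 1`. -/
theorem opportunistic_ratio_consistent
    {Ω : Type v} {α β : Type u} [MeasurableSpace Ω] [MeasurableSpace α] [MeasurableSpace β]
    (P : Measure Ω) [IsProbabilityMeasure P]
    (μ : Measure α) (ν : Measure β)
    (A : ℕ → Ω → α) (B : ℕ → Ω → β)
    (hAm : ∀ i, Measurable (A i)) (hBm : ∀ j, Measurable (B j))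
    (hindep : iIndepFun (m := pdcSumMS) (pdcSumFun A B) P)
    (hA : ∀ i, P.map (A i) = μ) (hB : ∀ j, P.map (B j) = ν)
    (h : α × β → ℝ) (hh01 : ∀ z, h z = 0 ∨ h z = 1) (hhm : Measurable h)
    (g : α × β → ℝ) (hgm : Measurable g) (hgb : ∃ C, ∀ z, |g z| ≤ C)
    (p : ℝ) (hp : p = ∫ ω, h (A 0 ω, B 0 ω) ∂P) (hp' : p ∈ Set.Ioc (0 : ℝ) 1)
    (EgS : ℝ) (hEgS : EgS = (∫ ω, g (A 0 ω, B 0 ω) * h (A 0 ω, B 0 ω) ∂P) / p)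
    (G W : ℕ → ℕ → Ω → ℝ)
    (hG : ∀ m₁ m₂ ω, G m₁ m₂ ω =
      ∑ i ∈ Finset.range m₁, ∑ j ∈ Finset.range m₂,
        g (A i ω, B j ω) * h (A i ω, B j ω))
    (hW : ∀ m₁ m₂ ω, W m₁ m₂ ω =
      ∑ i ∈ Finset.range m₁, ∑ j ∈ Finset.range m₂, h (A i ω, B j ω)) :
    ∀ ε > (0 : ℝ),
      Tendsto (fun m : ℕ × ℕ =>
          P {ω | 0 < W m.1 m.2 ω ∧ |G m.1 m.2 ω / W m.1 m.2 ω - EgS| ≤ ε})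
        atTop (nhds 1) := by
  intro ε hε
  obtain ⟨C, hgC⟩ := hgb
  have hhC (z : α × β) : |h z| ≤ 1 := by rcases hh01 z with hz | hz <;> simp [hz]
  have hghC (z : α × β) : |g z * h z| ≤ C := by
    rw [abs_mul]
    exact (mul_le_of_le_one_right (abs_nonneg _) (hhC z)).trans (hgC z)
  simp only [hG, hW]
  subst hp hEgS
  have hGlim := tendstoInMeasure_sum_sum_comp_div hAm hBm hindep hA hB (hgm.mul hhm) hghC
  have hWlim := tendstoInMeasure_sum_sum_comp_div hAm hBm hindep hA hB hhm hhC
  exact tendsto_measure_div_of_tendstoInMeasure (fun m => by positivity) hp'.1 hGlim hWlim hε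
end
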